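/- For integers r ≥ 1, n ≥ 2r, and every 0 ≤ t ≤ C(n, r), there exists 0 ≤ i ≤ C(2r, r) such that b(t) = M(i), where b(t) is the maximum of |B(F)| over all F ⊆ C([n], r) with |F| = t. -/

import Mathlib

/-- The ground set `[n] = {1, …, n}` as a finset of naturals. -/
def ground (n : ℕ) : Finset ℕ := Finset.Icc 1 n

/-- The nested condition `j ∈ e σ₁ (j+1 ∈ e σ₂ (⋯))` determined by a sequence `σ`
over `{∧, ∨}` (where `false` encodes `∧` and `true` encodes `∨`). -/
def setCond (e : Finset ℕ) : ℕ → List Bool → Bool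
  | j, [] => decide (j ∈ e)
  | j, false :: s => decide (j ∈ e) && setCond e (j + 1) s
  | j, true :: s => decide (j ∈ e) || setCond e (j + 1) s

/-- `Θ_r = Υ_r ∪ {α, ω}` (elements of `Υ_r` are sequences over `{∧, ∨}`, with
`false` encoding `∧` and `true` encoding `∨`). -/
inductive Theta where
  | alpha : Theta
  | seq (σ : List Bool) : Theta
  | omega : Theta

/-- Membership in `Θ_r`: a sequence must contain fewer than `r` symbols `∧`
and fewer than `r` symbols `∨`. -/
def Theta.valid (r : ℕ) : Theta → Prop
  | .seq σ => σ.count false < r ∧ σ.count true < r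
  | _ => True

/-- `T_r(σ)` for `σ ∈ Θ_r`: the `r`-subsets of `[n]` satisfying the nested condition
given by `σ`; `T_r(α) = ∅` and `T_r(ω) = the family of all r-subsets of [n]`. -/
def Theta.Tset (n r : ℕ) : Theta → Finset (Finset ℕ)
  | .alpha => ∅
  | .seq σ => (Finset.powersetCard r (ground n)).filter (fun e => setCond e 1 σ = true)
  | .omega => Finset.powersetCard r (ground n)

/-- Encode the symbols for the lexicographic comparison: `∧ ↦ 0`, `* ↦ 1`, `∨ ↦ 2`. -/
def symCode (b : Bool) : ℕ := if b then 2 else 0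

/-- The order on `Θ_r`: `α` is minimal, `ω` is maximal, and sequences are compared
lexicographically after appending `*`, with `∧ < * < ∨`. -/
def Theta.lt : Theta → Theta → Prop
  | _, .alpha => False
  | .alpha, _ => True
  | .omega, _ => False
  | _, .omega => True
  | .seq σ, .seq τ => List.Lex (· < ·) (σ.map symCode ++ [1]) (τ.map symCode ++ [1])

/-- The position of an element of `Θ_r` in the linear order on `Θ_r`
(the number of elements of `Θ_r` strictly below it; `α` has position `0`). -/
noncomputable def Theta.posOf (r : ℕ) (t : Theta) : ℕ :=
  Set.ncard {x : Theta | x.valid r ∧ x.lt t}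

/-- The blocker `B(F)`: the `r`-subsets of `[n]` meeting every member of `F`. -/
def blockerT (n r : ℕ) (F : Finset (Finset ℕ)) : Finset (Finset ℕ) :=
  (Finset.powersetCard r (ground n)).filter (fun e => ∀ f ∈ F, (e ∩ f).Nonempty)

/-- `σ̄`: interchange `∧` and `∨`; `ᾱ = ω` and `ω̄ = α`. -/
def Theta.bar : Theta → Theta
  | .alpha => .omega
  | .seq σ => .seq (σ.map not)
  | .omega => .alpha

/-!
Consecutive elements `τ < σ` of `Θ_r` satisfy `T_r(τ) ⊊ T_r(σ)`; as `T_r(α) = ∅` and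
`T_r(ω) = C([n], r)`, every `1 ≤ t ≤ C(n, r)` has `|T_r(τ)| < t ≤ |T_r(σ)|` for such a pair.
The blocker of `T_r(θ)` is `T_r(θ̄)`: by De Morgan, `g` fails `θ̄` iff `[n] \ g` satisfies `θ`,
and a set satisfying `θ` contains a satisfying set of at most `r` elements, which pads to an
`r`-set disjoint from `g`. Let `f₀` be the lexicographically first `r`-set outside `T_r(τ)`.
Every `g ∈ T_r(τ̄) \ T_r(σ̄)` misses `f₀`, so `W = T_r(τ) ∪ {f₀}` already has blocker
`T_r(σ̄)`, and so does every `F` with `W ⊆ F ⊆ T_r(σ)`. Conversely, `e` misses `f` iff the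
reversal of `e` lies in the reversed complement of `f`; the reversal turns the lexicographic order
into colex, and the Kruskal–Katona theorem says that among `t`-families the initial segment `W`
has the largest blocker.
-/

open Finset

/-- The positions of the symbols `∧` of `σ`, the first symbol of `σ` standing at position `j`. -/
def andPos : ℕ → List Bool → Finset ℕ
  | _, [] => ∅
  | j, false :: s => insert j (andPos (j + 1) s)
  | j, true :: s => andPos (j + 1) s

def orPos : ℕ → List Bool → Finset ℕ
  | _, [] => ∅
  | j, false :: s => orPos (j + 1) s
  | j, true :: s => insert j (orPos (j + 1) s)

section Positions

variable {i : ℕ}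

lemma bounds_of_mem_andPos : ∀ {σ : List Bool} {j : ℕ}, i ∈ andPos j σ → j ≤ i ∧ i < j + σ.length
  | [], _, h => by simp [andPos] at h
  | false :: s, j, h => by
    rcases mem_insert.1 h with rfl | h
    · simp
    · have := bounds_of_mem_andPos h; simp only [List.length_cons]; omega
  | true :: s, j, h => by
    have := bounds_of_mem_andPos (σ := s) h; simp only [List.length_cons]; omega

lemma bounds_of_mem_orPos : ∀ {σ : List Bool} {j : ℕ}, i ∈ orPos j σ → j ≤ i ∧ i < j + σ.length
  | [], _, h => by simp [orPos] at h
  | true :: s, j, h => by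
    rcases mem_insert.1 h with rfl | h
    · simp
    · have := bounds_of_mem_orPos h; simp only [List.length_cons]; omega
  | false :: s, j, h => by
    have := bounds_of_mem_orPos (σ := s) h; simp only [List.length_cons]; omega

lemma card_andPos : ∀ (σ : List Bool) (j : ℕ), #(andPos j σ) = σ.count false
  | [], _ => rfl
  | false :: s, j => by
    have : j ∉ andPos (j + 1) s := fun h => by have := bounds_of_mem_andPos h; omega
    simp [andPos, card_insert_of_notMem this, card_andPos s]
  | true :: s, j => by simp [andPos, card_andPos s]

lemma card_orPos : ∀ (σ : List Bool) (j : ℕ), #(orPos j σ) = σ.count true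
  | [], _ => rfl
  | true :: s, j => by
    have : j ∉ orPos (j + 1) s := fun h => by have := bounds_of_mem_orPos h; omega
    simp [orPos, card_insert_of_notMem this, card_orPos s]
  | false :: s, j => by simp [orPos, card_orPos s]

lemma disjoint_andPos_orPos : ∀ (σ : List Bool) (j : ℕ), Disjoint (andPos j σ) (orPos j σ)
  | [], _ => by simp [andPos]
  | false :: s, j => by
    simp only [andPos, orPos, disjoint_insert_left]
    exact ⟨fun h => by have := bounds_of_mem_orPos h; omega, disjoint_andPos_orPos s _⟩
  | true :: s, j => by
    simp only [andPos, orPos, disjoint_insert_right]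
    exact ⟨fun h => by have := bounds_of_mem_andPos h; omega, disjoint_andPos_orPos s _⟩

lemma mem_andPos_or_mem_orPos : ∀ {σ : List Bool} {j : ℕ}, j ≤ i → i < j + σ.length →
    i ∈ andPos j σ ∨ i ∈ orPos j σ
  | [], _, h₁, h₂ => by rw [List.length_nil] at h₂; omega
  | b :: s, j, h₁, h₂ => by
    rcases h₁.eq_or_lt with rfl | h
    · cases b <;> simp [andPos, orPos]
    · have := mem_andPos_or_mem_orPos (σ := s) (Nat.succ_le_of_lt h)
        (by simp only [List.length_cons] at h₂; omega)
      cases b <;> simp [andPos, orPos] <;> tauto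

lemma andPos_append : ∀ (σ s : List Bool) (j : ℕ),
    andPos j (σ ++ s) = andPos j σ ∪ andPos (j + σ.length) s
  | [], _, _ => by simp [andPos]
  | b :: σ, s, j => by
    rw [List.cons_append, List.length_cons, ← add_assoc, ← add_right_comm]
    cases b <;> simp [andPos, andPos_append σ s (j + 1), insert_union]

lemma andPos_replicate_true (k j : ℕ) : andPos j (List.replicate k true) = ∅ := by
  induction k generalizing j with
  | zero => rfl
  | succ k ih => simp [List.replicate_succ, andPos, ih]

lemma andPos_subset_Icc (σ : List Bool) (j : ℕ) : andPos j σ ⊆ Icc j (j + σ.length - 1) :=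
  fun _ h => by have := bounds_of_mem_andPos h; rw [mem_Icc]; omega

end Positions

section SetCond

variable {e f g : Finset ℕ}

lemma setCond_mono (hfg : f ⊆ g) :
    ∀ {σ : List Bool} {j : ℕ}, setCond f j σ = true → setCond g j σ = true
  | [], _, h => by simpa [setCond] using hfg (by simpa [setCond] using h)
  | false :: s, _, h => by
    simp only [setCond, Bool.and_eq_true, decide_eq_true_eq] at h ⊢
    exact ⟨hfg h.1, setCond_mono hfg h.2⟩
  | true :: s, _, h => by
    simp only [setCond, Bool.or_eq_true, decide_eq_true_eq] at h ⊢
    exact h.imp (@hfg _) (setCond_mono hfg)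

lemma setCond_map_not : ∀ {σ : List Bool} {j : ℕ},
    (∀ x, j ≤ x → x ≤ j + σ.length → (x ∈ g ↔ x ∉ e)) →
      setCond g j (σ.map not) = !setCond e j σ
  | [], j, h => by simp [setCond, h j le_rfl (by simp)]
  | b :: s, j, h => by
    have hj := h j le_rfl (by simp)
    have ih := setCond_map_not (σ := s) (j := j + 1) fun x h₁ h₂ =>
      h x (by omega) (by simp only [List.length_cons]; omega)
    cases b <;> simp [setCond, hj, ih]

lemma exists_subset_card_le_setCond : ∀ {σ : List Bool} {j : ℕ}, setCond e j σ = true →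
    ∃ e' ⊆ e, #e' ≤ σ.count false + 1 ∧ setCond e' j σ = true
  | [], j, h => ⟨{j}, by simpa [setCond] using h, by simp, by simp [setCond]⟩
  | false :: s, j, h => by
    simp only [setCond, Bool.and_eq_true, decide_eq_true_eq] at h
    obtain ⟨e', he', hcard, hs⟩ := exists_subset_card_le_setCond h.2
    refine ⟨insert j e', insert_subset h.1 he', ?_, ?_⟩
    · grw [card_insert_le, hcard]; simp
    · simp [setCond, setCond_mono (subset_insert j e') hs]
  | true :: s, j, h => by
    simp only [setCond, Bool.or_eq_true, decide_eq_true_eq] at h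
    rcases h with hj | hs
    · exact ⟨{j}, by simpa using hj, by simp, by simp [setCond]⟩
    · obtain ⟨e', he', hcard, hs⟩ := exists_subset_card_le_setCond hs
      exact ⟨e', he', by simpa using hcard, by simp [setCond, hs]⟩

lemma setCond_of_success {i : ℕ} (hi : i ∈ e) : ∀ {σ : List Bool} {j : ℕ},
    i ∈ orPos j σ ∨ i = j + σ.length → (∀ c ∈ andPos j σ, c < i → c ∈ e) →
      setCond e j σ = true
  | [], j, hpos, _ => by simp_all [orPos, setCond]
  | false :: s, j, hpos, hand => by
    have hji : j < i := by
      rcases hpos with h | h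
      · exact (bounds_of_mem_orPos (σ := s) h).1
      · simp only [List.length_cons] at h; omega
    simp only [setCond, Bool.and_eq_true, decide_eq_true_eq]
    refine ⟨hand j (mem_insert_self _ _) hji, setCond_of_success hi ?_ ?_⟩
    · simpa [orPos, add_assoc, add_comm 1] using hpos
    · exact fun c hc => hand c (mem_insert_of_mem hc)
  | true :: s, j, hpos, hand => by
    simp only [setCond, Bool.or_eq_true, decide_eq_true_eq]
    simp only [orPos, mem_insert, List.length_cons] at hpos
    rcases hpos with (rfl | h) | h
    · exact Or.inl hi
    · exact Or.inr (setCond_of_success hi (Or.inl h) hand)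
    · exact Or.inr (setCond_of_success hi (Or.inr (by omega)) hand)

lemma setCond_of_agree_below {d : ℕ} (hd : d ∈ e) (hdf : d ∉ f)
    (hbelow : ∀ c ∈ f, c < d → c ∈ e) :
    ∀ {σ : List Bool} {j : ℕ}, j ≤ d → setCond f j σ = true → setCond e j σ = true
  | [], j, hjd, h => by
    simp only [setCond, decide_eq_true_eq] at h ⊢
    exact hbelow j h (lt_of_le_of_ne hjd (by rintro rfl; exact hdf h))
  | b :: s, j, hjd, h => by
    rcases hjd.eq_or_lt with rfl | hjd
    · cases b <;> simp_all [setCond]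
    · cases b
      · simp only [setCond, Bool.and_eq_true, decide_eq_true_eq] at h ⊢
        exact ⟨hbelow j h.1 hjd, setCond_of_agree_below hd hdf hbelow hjd h.2⟩
      · simp only [setCond, Bool.or_eq_true, decide_eq_true_eq] at h ⊢
        exact h.imp (hbelow j · hjd) (setCond_of_agree_below hd hdf hbelow hjd)

lemma setCond_replicate_false {k j : ℕ} :
    setCond e j (List.replicate k false) = true ↔ Icc j (j + k) ⊆ e := by
  induction k generalizing j with
  | zero => simp [setCond]
  | succ k ih =>
    have : Icc j (j + (k + 1)) = insert j (Icc (j + 1) (j + 1 + k)) := by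
      ext x; simp only [mem_Icc, mem_insert]; omega
    simp only [List.replicate_succ, setCond, Bool.and_eq_true, decide_eq_true_eq, ih, this,
      insert_subset_iff]

lemma setCond_replicate_true {k j : ℕ} :
    setCond e j (List.replicate k true) = true ↔ ∃ x ∈ Icc j (j + k), x ∈ e := by
  induction k generalizing j with
  | zero => simp [setCond]
  | succ k ih =>
    have : Icc j (j + (k + 1)) = insert j (Icc (j + 1) (j + 1 + k)) := by
      ext x; simp only [mem_Icc, mem_insert]; omega
    simp only [List.replicate_succ, setCond, Bool.or_eq_true, decide_eq_true_eq, ih, this,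
      exists_mem_insert]

/-- Evaluating the nested condition of `σ` on `e` runs through to its last atom `j + σ.length`. -/
def Reaches (e : Finset ℕ) (j : ℕ) (σ : List Bool) : Prop :=
  andPos j σ ⊆ e ∧ Disjoint (orPos j σ) e

@[simp] lemma reaches_cons_false {j : ℕ} {s : List Bool} :
    Reaches e j (false :: s) ↔ j ∈ e ∧ Reaches e (j + 1) s := by
  simp [Reaches, andPos, orPos, insert_subset_iff, and_assoc]

@[simp] lemma reaches_cons_true {j : ℕ} {s : List Bool} :
    Reaches e j (true :: s) ↔ j ∉ e ∧ Reaches e (j + 1) s := by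
  simp [Reaches, andPos, orPos, and_left_comm]

lemma setCond_append_of_reaches (s : List Bool) : ∀ {σ : List Bool} {j : ℕ},
    Reaches e j σ → setCond e j (σ ++ s) = setCond e (j + σ.length) s
  | [], _, _ => rfl
  | false :: σ, j, h => by
    rw [reaches_cons_false] at h
    simp [setCond, h.1, setCond_append_of_reaches s h.2, add_assoc, add_comm 1]
  | true :: σ, j, h => by
    rw [reaches_cons_true] at h
    simp [setCond, h.1, setCond_append_of_reaches s h.2, add_assoc, add_comm 1]

lemma setCond_append_of_not_reaches (s : List Bool) : ∀ {σ : List Bool} {j : ℕ},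
    ¬Reaches e j σ → setCond e j (σ ++ s) = setCond e j σ
  | [], _, h => absurd ⟨by simp [andPos], by simp [orPos]⟩ h
  | false :: σ, j, h => by
    by_cases hj : j ∈ e
    · simp [setCond, hj, setCond_append_of_not_reaches s (σ := σ) (by simpa [hj] using h)]
    · simp [setCond, hj]
  | true :: σ, j, h => by
    by_cases hj : j ∈ e
    · simp [setCond, hj]
    · simp [setCond, hj, setCond_append_of_not_reaches s (σ := σ) (by simpa [hj] using h)]

lemma setCond_eq_of_reaches {σ : List Bool} {j : ℕ} (hr : Reaches e j σ) :
    setCond e j σ = decide (j + σ.length ∈ e) := by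
  simpa [setCond] using setCond_append_of_reaches [] hr

lemma setCond_append_true {σ s : List Bool} {j : ℕ} (h : setCond e j σ = true) :
    setCond e j (σ ++ true :: s) = true := by
  by_cases hr : Reaches e j σ
  · rw [setCond_eq_of_reaches hr, decide_eq_true_eq] at h
    simp [setCond_append_of_reaches _ hr, setCond, h]
  · rwa [setCond_append_of_not_reaches _ hr]

lemma setCond_of_setCond_append_false {σ s : List Bool} {j : ℕ}
    (h : setCond e j (σ ++ false :: s) = true) : setCond e j σ = true := by
  by_cases hr : Reaches e j σ
  · rw [setCond_append_of_reaches _ hr] at h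
    simp only [setCond, Bool.and_eq_true, decide_eq_true_eq] at h
    simpa [setCond_eq_of_reaches hr] using h.1
  · rwa [setCond_append_of_not_reaches _ hr] at h

end SetCond

lemma List.exists_eq_append_false_replicate_true {τ : List Bool} (h : false ∈ τ) :
    ∃ σ p, τ = σ ++ false :: List.replicate p true := by
  induction τ with
  | nil => simp at h
  | cons b τ ih =>
    by_cases hτ : false ∈ τ
    · obtain ⟨σ, p, rfl⟩ := ih hτ
      exact ⟨b :: σ, p, rfl⟩
    · have hb : b = false := by simpa [hτ, eq_comm] using h
      exact ⟨[], τ.length, by simpa [hb, List.eq_replicate_length] using hτ⟩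

lemma mem_ground {n x : ℕ} : x ∈ ground n ↔ 1 ≤ x ∧ x ≤ n := mem_Icc

lemma card_ground (n : ℕ) : #(ground n) = n := by simp [ground]

lemma card_ground_sdiff {n r : ℕ} {g : Finset ℕ} (hg : g ∈ powersetCard r (ground n)) :
    #(ground n \ g) = n - r := by
  rw [mem_powersetCard] at hg
  rw [card_sdiff_of_subset hg.1, card_ground, hg.2]

namespace Theta

variable {n r : ℕ} {θ : Theta} {e f g : Finset ℕ}

def Holds : Theta → Finset ℕ → Prop
  | .alpha, _ => False
  | .seq σ, e => setCond e 1 σ = true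
  | .omega, _ => True

@[simp] lemma holds_seq {σ : List Bool} {e : Finset ℕ} :
    (seq σ).Holds e ↔ setCond e 1 σ = true := Iff.rfl

lemma mem_Tset : e ∈ θ.Tset n r ↔ e ∈ powersetCard r (ground n) ∧ θ.Holds e := by
  cases θ <;> simp [Tset, Holds]

lemma Tset_subset (θ : Theta) : θ.Tset n r ⊆ powersetCard r (ground n) :=
  fun _ he => (mem_Tset.1 he).1

lemma Holds.mono (h : θ.Holds f) (hfg : f ⊆ g) : θ.Holds g := by
  cases θ with
  | seq σ => exact setCond_mono hfg h
  | _ => exact h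

lemma valid_bar (h : θ.valid r) : θ.bar.valid r := by
  cases θ with
  | seq σ =>
    have hcount (b : Bool) : (σ.map not).count b = σ.count (!b) := by
      rw [← Bool.not_not b, List.count_map_of_injective _ _ Bool.not_injective, Bool.not_not]
    exact ⟨by simpa [bar, valid, hcount] using h.2, by simpa [bar, valid, hcount] using h.1⟩
  | _ => trivial

lemma holds_bar_iff (hθ : θ.valid r) (hn : 2 * r ≤ n) :
    θ.bar.Holds g ↔ ¬θ.Holds (ground n \ g) := by
  cases θ with
  | alpha => simp [bar, Holds]
  | omega => simp [bar, Holds]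
  | seq σ =>
    have hlen := σ.count_false_add_count_true
    obtain ⟨h₁, h₂⟩ := hθ
    have := setCond_map_not (σ := σ) (j := 1) (g := g) (e := ground n \ g) fun x h₁ h₂ => by
      rw [mem_sdiff, mem_ground, not_and_not_right]
      exact ⟨fun h _ => h, fun h => h ⟨h₁, by omega⟩⟩
    simp [bar, Holds, this]

lemma exists_subset_card_le_holds (hθ : θ.valid r) (h : θ.Holds e) :
    ∃ e' ⊆ e, #e' ≤ r ∧ θ.Holds e' := by
  cases θ with
  | alpha => exact h.elim
  | omega => exact ⟨∅, empty_subset _, by simp, trivial⟩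
  | seq σ =>
    obtain ⟨e', he', hcard, hs⟩ := exists_subset_card_le_setCond h
    exact ⟨e', he', by have := hθ.1; omega, hs⟩

theorem blockerT_Tset (hθ : θ.valid r) (hn : 2 * r ≤ n) :
    blockerT n r (θ.Tset n r) = θ.bar.Tset n r := by
  ext g
  simp only [blockerT, mem_filter, mem_Tset (θ := θ.bar), and_congr_right_iff]
  intro hg
  rw [holds_bar_iff hθ hn]
  constructor
  · intro hmeet hholds
    obtain ⟨e', he', hcard, he'θ⟩ := exists_subset_card_le_holds hθ hholds
    obtain ⟨f, he'f, hf, hfr⟩ := exists_subsuperset_card_eq he' hcard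
      (by rw [card_ground_sdiff hg]; omega)
    have hfθ : f ∈ θ.Tset n r :=
      mem_Tset.2 ⟨mem_powersetCard.2 ⟨hf.trans sdiff_subset, hfr⟩, he'θ.mono he'f⟩
    obtain ⟨x, hx⟩ := hmeet f hfθ
    exact (mem_sdiff.1 (hf (mem_inter.1 hx).2)).2 (mem_inter.1 hx).1
  · intro hnot f hf
    rw [← not_disjoint_iff_nonempty_inter]
    intro hdisj
    refine hnot ((mem_Tset.1 hf).2.mono fun x hx => mem_sdiff.2 ⟨?_, ?_⟩)
    · exact (mem_powersetCard.1 (mem_Tset.1 hf).1).1 hx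
    · exact disjoint_right.1 hdisj hx

end Theta

/-- `e` precedes `f` in the lexicographic order: the least element of `e ∆ f` lies in `e`. -/
def LexLT (e f : Finset ℕ) : Prop := ∃ d ∈ e, d ∉ f ∧ ∀ c ∈ f, c < d → c ∈ e

def IsLexDownClosed (n r : ℕ) (W : Finset (Finset ℕ)) : Prop :=
  ∀ f ∈ W, ∀ e ∈ powersetCard r (ground n), LexLT e f → e ∈ W

lemma Theta.isLexDownClosed_Tset {n r : ℕ} (θ : Theta) : IsLexDownClosed n r (θ.Tset n r) := by
  intro f hf e he ⟨d, hde, hdf, hlex⟩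
  refine Theta.mem_Tset.2 ⟨he, ?_⟩
  obtain ⟨-, hθ⟩ := Theta.mem_Tset.1 hf
  cases θ with
  | seq σ =>
    have hd : 1 ≤ d := (mem_ground.1 ((mem_powersetCard.1 he).1 hde)).1
    exact setCond_of_agree_below hde hdf hlex hd hθ
  | _ => exact hθ

lemma blockerT_anti {n r : ℕ} {F G : Finset (Finset ℕ)} (h : F ⊆ G) :
    blockerT n r G ⊆ blockerT n r F :=
  monotone_filter_right _ fun _ _ hG f hf => hG f (h hf)

/-- If the first difference `d` of `e` with `f` is a position of `τ`, then `e` succeeds at `d`;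
otherwise `d` lies beyond the positions of `τ`, where `f` has no gaps, so `e = f`. -/
lemma setCond_or_eq_of_lexLT {n r : ℕ} {e f : Finset ℕ} {τ : List Bool}
    (he : e ∈ powersetCard r (ground n)) (hf : f ∈ powersetCard r (ground n))
    (hand : andPos 1 τ ⊆ f) (htail : ∀ c ∈ f, ∀ x, 1 + τ.length < x → x ≤ c → x ∈ f)
    (hlex : LexLT e f) : setCond e 1 τ = true ∨ e = f := by
  obtain ⟨d, hde, hdf, hlex⟩ := hlex
  by_cases hdτ : d ≤ 1 + τ.length
  · refine Or.inl (setCond_of_success hde ?_ fun c hc => hlex c (hand hc))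
    rcases hdτ.lt_or_eq with hdτ | hdτ
    · have hd : 1 ≤ d := (mem_ground.1 ((mem_powersetCard.1 he).1 hde)).1
      exact Or.inl ((mem_andPos_or_mem_orPos hd hdτ).resolve_left fun h => hdf (hand h))
    · exact Or.inr hdτ
  · have hcard : #e ≤ #f := by rw [(mem_powersetCard.1 he).2, (mem_powersetCard.1 hf).2]
    refine Or.inr (eq_of_subset_of_card_le (fun c hc => hlex c hc ?_) hcard).symm
    by_contra! hdc
    exact hdf (htail c hc d (by omega) hdc)

section KruskalKatona

open scoped FinsetFamily

variable {n r : ℕ}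

lemma filter_exists_disjoint_eq_shadow_compls {𝒜 : Finset (Finset (Fin n))}
    (h𝒜 : (𝒜 : Set (Finset (Fin n))).Sized r) (hn : 2 * r ≤ n) :
    (powersetCard r univ).filter (fun t => ∃ s ∈ 𝒜, Disjoint t s) = ∂^[n - 2 * r] 𝒜ᶜˢ := by
  ext t
  simp only [mem_filter, mem_powersetCard, subset_univ, true_and,
    mem_shadow_iterate_iff_exists_sdiff, mem_compls]
  constructor
  · rintro ⟨ht, s, hs, hts⟩
    refine ⟨sᶜ, by rwa [compl_compl], subset_compl_iff_disjoint_right.2 hts, ?_⟩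
    rw [card_sdiff_of_subset (subset_compl_iff_disjoint_right.2 hts), card_compl,
      Fintype.card_fin, h𝒜 hs, ht]
    omega
  · rintro ⟨u, hu, htu, hcard⟩
    have hu' : #u = n - r := by
      rw [← compl_compl u, card_compl, Fintype.card_fin, h𝒜 hu]
    refine ⟨?_, uᶜ, hu, subset_compl_iff_disjoint_right.1 (by rwa [compl_compl])⟩
    have := card_le_card htu
    rw [card_sdiff_of_subset htu, hu'] at hcard
    omega

lemma card_filter_forall_not_disjoint_le {𝒜 𝒞 : Finset (Finset (Fin n))}
    (h𝒜 : (𝒜 : Set (Finset (Fin n))).Sized r) (h𝒞 : Colex.IsInitSeg 𝒞ᶜˢ (n - r)) (h𝒞𝒜 : #𝒞 ≤ #𝒜)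
    (hn : 2 * r ≤ n) :
    #((powersetCard r univ).filter (fun t => ∀ s ∈ 𝒜, ¬Disjoint t s)) ≤
      #((powersetCard r univ).filter (fun t => ∀ s ∈ 𝒞, ¬Disjoint t s)) := by
  have h𝒞r : (𝒞 : Set (Finset (Fin n))).Sized r := fun s hs => by
    have := h𝒞.1 (mem_compls.2 (by rwa [compl_compl] : sᶜᶜ ∈ 𝒞))
    rw [card_compl, Fintype.card_fin] at this
    have := card_le_univ s; rw [Fintype.card_fin] at this; omega
  have hkk : #(∂^[n - 2 * r] 𝒞ᶜˢ) ≤ #(∂^[n - 2 * r] 𝒜ᶜˢ) :=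
    iterated_kk (by simpa using h𝒜.compls) (by simpa using h𝒞𝒜) h𝒞
  have hsplit (ℬ : Finset (Finset (Fin n))) := card_filter_add_card_filter_not
    (s := powersetCard r (univ : Finset (Fin n))) (fun t => ∃ s ∈ ℬ, Disjoint t s)
  have h𝒜s := hsplit 𝒜
  have h𝒞s := hsplit 𝒞
  simp only [not_exists, not_and] at h𝒜s h𝒞s
  rw [filter_exists_disjoint_eq_shadow_compls h𝒜 hn] at h𝒜s
  rw [filter_exists_disjoint_eq_shadow_compls h𝒞r hn] at h𝒞s
  omega

end KruskalKatona

section Reversal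

variable {n r : ℕ}

/-- `i ↦ n - i` identifies `Fin n` with `[n]` reversing the order, so that the lexicographic
order on `r`-subsets of `[n]` becomes the colexicographic order of their complements. -/
def revEmb (n : ℕ) : Fin n ↪ ℕ where
  toFun i := n - i
  inj' i j h := Fin.ext (by have := i.isLt; have := j.isLt; dsimp only at h; omega)

@[simp] lemma revEmb_apply (i : Fin n) : revEmb n i = n - i := rfl

lemma map_revEmb_univ : univ.map (revEmb n) = ground n := by
  ext x
  simp only [mem_map, mem_univ, true_and, mem_ground, revEmb_apply]
  constructor
  · rintro ⟨i, rfl⟩; have := i.isLt; omega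
  · rintro ⟨h₁, h₂⟩; exact ⟨⟨n - x, by omega⟩, by dsimp only; omega⟩

lemma powersetCard_ground :
    powersetCard r (ground n) =
      (powersetCard r univ).map (mapEmbedding (revEmb n)).toEmbedding := by
  rw [← map_revEmb_univ, powersetCard_map]

lemma lexLT_map_compl_iff {s t : Finset (Fin n)} :
    LexLT (sᶜ.map (revEmb n)) (tᶜ.map (revEmb n)) ↔ toColex s < toColex t := by
  have hlt {a b : Fin n} : revEmb n a < revEmb n b ↔ b < a := by
    simp only [revEmb_apply, Fin.lt_def]
    have := a.isLt; have := b.isLt; omega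
  simp only [LexLT, Colex.toColex_lt_toColex_iff_exists_forall_lt, mem_map, mem_compl]
  constructor
  · rintro ⟨_, ⟨a, has, rfl⟩, hat, hall⟩
    refine ⟨a, not_not.1 fun h => hat ⟨a, h, rfl⟩, has, fun b hbs hbt => ?_⟩
    by_contra! hab
    have hab : a < b := lt_of_le_of_ne hab (by rintro rfl; exact has hbs)
    obtain ⟨c, hcs, hcb⟩ := hall _ ⟨b, hbt, rfl⟩ (hlt.2 hab)
    exact hcs ((revEmb n).injective hcb ▸ hbs)
  · rintro ⟨a, hat, has, hall⟩
    refine ⟨_, ⟨a, has, rfl⟩, fun ⟨c, hc, hca⟩ => hc ((revEmb n).injective hca ▸ hat), ?_⟩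
    rintro _ ⟨b, hbt, rfl⟩ hba
    exact ⟨b, fun hbs => (hall b hbs hbt).not_gt (hlt.1 hba), rfl⟩

lemma blockerT_map (𝒜 : Finset (Finset (Fin n))) :
    blockerT n r (𝒜.map (mapEmbedding (revEmb n)).toEmbedding) =
      ((powersetCard r univ).filter (fun t => ∀ s ∈ 𝒜, ¬Disjoint t s)).map
        (mapEmbedding (revEmb n)).toEmbedding := by
  rw [blockerT, powersetCard_ground, filter_map]
  congr 2
  ext t
  simp [← map_inter, not_disjoint_iff_nonempty_inter]

end Reversal

lemma card_blockerT_le_of_isLexDownClosed {n r : ℕ} (hn : 2 * r ≤ n)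
    {W F : Finset (Finset ℕ)} (hW : W ⊆ powersetCard r (ground n)) (hWd : IsLexDownClosed n r W)
    (hF : F ⊆ powersetCard r (ground n)) (hWF : #W ≤ #F) :
    #(blockerT n r F) ≤ #(blockerT n r W) := by
  rw [powersetCard_ground] at hW hF
  obtain ⟨𝒜, h𝒜, rfl⟩ := subset_map_iff.1 hF
  obtain ⟨𝒞, h𝒞, rfl⟩ := subset_map_iff.1 hW
  rw [card_map, card_map] at hWF
  rw [blockerT_map, blockerT_map, card_map, card_map]
  have hcard {s : Finset (Fin n)} (hs : sᶜ ∈ 𝒞) : #s = n - r := by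
    rw [← (mem_powersetCard.1 (h𝒞 hs)).2, card_compl, Fintype.card_fin]
    have := card_le_univ s; rw [Fintype.card_fin] at this; omega
  refine card_filter_forall_not_disjoint_le (fun s hs => (mem_powersetCard.1 (h𝒜 hs)).2)
    ⟨fun s hs => hcard (mem_compls.1 hs), ?_⟩ hWF hn
  rintro s t hs ⟨hts, ht⟩
  rw [mem_compls] at hs ⊢
  have htc : #tᶜ = r := by
    rw [card_compl, Fintype.card_fin, ht]; omega
  refine (mem_map' _).1 (hWd _ (mem_map_of_mem _ hs) _ ?_ (lexLT_map_compl_iff.2 hts))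
  rw [powersetCard_ground]
  exact mem_map_of_mem _ (mem_powersetCard.2 ⟨subset_univ _, htc⟩)

/-- A step `τ → σ` between consecutive elements of `Θ_r`, with `f₀` the lexicographically first
`r`-set outside `T_r(τ)`. The last field is the complemented form of
`B(T_r(τ) ∪ {f₀}) ⊆ T_r(σ̄)`. -/
structure IsStep (n r : ℕ) (τ σ : Theta) (f₀ : Finset ℕ) : Prop where
  mem : f₀ ∈ powersetCard r (ground n)
  holds : σ.Holds f₀
  not_holds : ¬τ.Holds f₀
  holds_of_holds : ∀ e, τ.Holds e → σ.Holds e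
  holds_of_lexLT : ∀ e ∈ powersetCard r (ground n), LexLT e f₀ → τ.Holds e ∨ e = f₀
  subset_of_holds : ∀ h ⊆ ground n, #h = n - r → σ.Holds h → ¬τ.Holds h → f₀ ⊆ h

namespace IsStep

variable {n r : ℕ} {τ σ : Theta} {f₀ : Finset ℕ}

lemma notMem_Tset (hs : IsStep n r τ σ f₀) : f₀ ∉ τ.Tset n r :=
  fun h => hs.not_holds (Theta.mem_Tset.1 h).2

lemma insert_subset_Tset (hs : IsStep n r τ σ f₀) : insert f₀ (τ.Tset n r) ⊆ σ.Tset n r := by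
  refine insert_subset (Theta.mem_Tset.2 ⟨hs.mem, hs.holds⟩) fun e he => ?_
  obtain ⟨he, hτ⟩ := Theta.mem_Tset.1 he
  exact Theta.mem_Tset.2 ⟨he, hs.holds_of_holds e hτ⟩

lemma card_Tset_lt (hs : IsStep n r τ σ f₀) : #(τ.Tset n r) < #(σ.Tset n r) := by
  simpa [card_insert_of_notMem hs.notMem_Tset] using card_le_card hs.insert_subset_Tset

lemma isLexDownClosed (hs : IsStep n r τ σ f₀) :
    IsLexDownClosed n r (insert f₀ (τ.Tset n r)) := by
  intro f hf e he hlex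
  rcases mem_insert.1 hf with rfl | hf
  · rcases hs.holds_of_lexLT e he hlex with h | rfl
    · exact mem_insert_of_mem (Theta.mem_Tset.2 ⟨he, h⟩)
    · exact mem_insert_self _ _
  · exact mem_insert_of_mem (τ.isLexDownClosed_Tset f hf e he hlex)

lemma blockerT_subset (hs : IsStep n r τ σ f₀) (hτ : τ.valid r) (hσ : σ.valid r)
    (hn : 2 * r ≤ n) : blockerT n r (insert f₀ (τ.Tset n r)) ⊆ σ.bar.Tset n r := by
  intro g hg
  have hgτ : g ∈ τ.bar.Tset n r := by
    rw [← τ.blockerT_Tset hτ hn]; exact blockerT_anti (subset_insert _ _) hg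
  obtain ⟨hgps, hmeet⟩ := mem_filter.1 hg
  refine Theta.mem_Tset.2 ⟨hgps, ?_⟩
  by_contra hgσ
  rw [Theta.holds_bar_iff hσ hn, not_not] at hgσ
  have hf₀ := hs.subset_of_holds _ sdiff_subset (card_ground_sdiff hgps) hgσ
    ((Theta.holds_bar_iff hτ hn).1 (Theta.mem_Tset.1 hgτ).2)
  obtain ⟨x, hx⟩ := hmeet f₀ (mem_insert_self _ _)
  exact (mem_sdiff.1 (hf₀ (mem_inter.1 hx).2)).2 (mem_inter.1 hx).1

theorem isGreatest_card_Tset_bar {t : ℕ} (hs : IsStep n r τ σ f₀) (hτ : τ.valid r)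
    (hσ : σ.valid r) (hn : 2 * r ≤ n)
    (ht₁ : #(τ.Tset n r) < t) (ht₂ : t ≤ #(σ.Tset n r)) :
    IsGreatest {m : ℕ | ∃ F ⊆ powersetCard r (ground n), #F = t ∧ #(blockerT n r F) = m}
      #(σ.bar.Tset n r) := by
  have hW : #(insert f₀ (τ.Tset n r)) = #(τ.Tset n r) + 1 := card_insert_of_notMem hs.notMem_Tset
  have hWB := hs.blockerT_subset hτ hσ hn
  constructor
  · obtain ⟨F, hWF, hFσ, hFt⟩ := exists_subsuperset_card_eq hs.insert_subset_Tset
      (by omega) ht₂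
    refine ⟨F, hFσ.trans σ.Tset_subset, hFt, congrArg card (subset_antisymm ?_ ?_)⟩
    · exact (blockerT_anti hWF).trans hWB
    · exact (σ.blockerT_Tset hσ hn).symm.subset.trans (blockerT_anti hFσ)
  · rintro _ ⟨F, hF, rfl, rfl⟩
    calc #(blockerT n r F)
        ≤ #(blockerT n r (insert f₀ (τ.Tset n r))) := card_blockerT_le_of_isLexDownClosed hn
          (hs.insert_subset_Tset.trans σ.Tset_subset) hs.isLexDownClosed hF (by omega)
      _ ≤ #(σ.bar.Tset n r) := card_le_card hWB

end IsStep

lemma subset_of_subset_ground_sdiff {n r : ℕ} {f h X : Finset ℕ} (hX : X ⊆ ground n)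
    (hXr : #X = r) (hh : h ⊆ ground n \ X) (hhr : #h = n - r) (hf : f ⊆ ground n \ X) : f ⊆ h := by
  have : #(ground n \ X) = n - r := by rw [card_sdiff_of_subset hX, card_ground, hXr]
  rwa [eq_of_subset_of_card_le hh (by omega)]

section Steps

variable {n r : ℕ}

/-- The lexicographically first `r`-set satisfying `τ ∨ ∧^k` but not `τ`. -/
def appendOrFirst (τ : List Bool) (k : ℕ) : Finset ℕ :=
  andPos 1 τ ∪ Icc (τ.length + 2) (τ.length + k + 2)

section AppendOr

variable {τ : List Bool} {k : ℕ}

lemma reaches_appendOrFirst : Reaches (appendOrFirst τ k) 1 τ := by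
  refine ⟨subset_union_left, disjoint_union_right.2 ⟨(disjoint_andPos_orPos τ 1).symm, ?_⟩⟩
  exact disjoint_left.2 fun x hx hx' => by
    have := bounds_of_mem_orPos hx; rw [mem_Icc] at hx'; omega

lemma appendOrFirst_mem_powersetCard (hk : τ.count false + k + 1 = r)
    (hτ : τ.count true + 1 < r) (hn : 2 * r ≤ n) :
    appendOrFirst τ k ∈ powersetCard r (ground n) := by
  have := τ.count_false_add_count_true
  have hand := andPos_subset_Icc τ 1
  refine mem_powersetCard.2 ⟨union_subset (hand.trans (Icc_subset_Icc_right (by omega)))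
    (Icc_subset_Icc (by omega) (by omega)), ?_⟩
  rw [appendOrFirst, card_union_of_disjoint, card_andPos, Nat.card_Icc]
  · omega
  · exact disjoint_of_subset_left hand (disjoint_left.2 fun x h₁ h₂ => by rw [mem_Icc] at h₁ h₂; omega)

lemma isStep_append_or (hk : τ.count false + k + 1 = r) (hτ : τ.count true + 1 < r)
    (hn : 2 * r ≤ n) :
    IsStep n r (.seq τ) (.seq (τ ++ true :: List.replicate k false)) (appendOrFirst τ k) := by
  have hmem := appendOrFirst_mem_powersetCard hk hτ hn
  have hlast : 1 + τ.length ∉ andPos 1 τ := fun h => by have := bounds_of_mem_andPos h; omega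
  have hIcc : Icc (1 + τ.length + 1) (1 + τ.length + 1 + k) =
      Icc (τ.length + 2) (τ.length + k + 2) := by congr 1 <;> omega
  refine ⟨hmem, ?_, ?_, fun e => setCond_append_true, fun e he hlex => ?_, ?_⟩
  · simp only [Theta.holds_seq, setCond_append_of_reaches _ reaches_appendOrFirst, setCond,
      Bool.or_eq_true, setCond_replicate_false, hIcc]
    exact Or.inr subset_union_right
  · rw [Theta.holds_seq, setCond_eq_of_reaches reaches_appendOrFirst, decide_eq_true_eq,
      appendOrFirst, mem_union, mem_Icc, not_or]
    exact ⟨hlast, by omega⟩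
  · refine setCond_or_eq_of_lexLT he hmem subset_union_left (fun c hc x hx hxc => ?_) hlex
    have : c ∉ andPos 1 τ := fun h => by have := bounds_of_mem_andPos h; omega
    simp only [appendOrFirst, mem_union, this, false_or, mem_Icc] at hc ⊢
    omega
  · intro h _ _ hσ hτ
    have hreach : Reaches h 1 τ := by
      by_contra hreach
      rw [Theta.holds_seq, setCond_append_of_not_reaches _ hreach] at hσ
      exact hτ hσ
    rw [Theta.holds_seq, setCond_eq_of_reaches hreach, decide_eq_true_eq] at hτ
    simp only [Theta.holds_seq, setCond_append_of_reaches _ hreach, setCond, Bool.or_eq_true,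
      decide_eq_true_eq, hτ, false_or, setCond_replicate_false, hIcc] at hσ
    exact union_subset hreach.1 hσ

end AppendOr

/-- The lexicographically first `r`-set satisfying `σ` but not `σ ∧ ∨^p`. -/
def dropAndFirst (r : ℕ) (σ : List Bool) (p : ℕ) : Finset ℕ :=
  insert (σ.length + 1) (andPos 1 σ) ∪ Icc (σ.length + p + 3) (2 * r)

section DropAnd

variable {σ : List Bool} {p x : ℕ}

lemma mem_dropAndFirst : x ∈ dropAndFirst r σ p ↔
    x = σ.length + 1 ∨ x ∈ andPos 1 σ ∨ (σ.length + p + 3 ≤ x ∧ x ≤ 2 * r) := by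
  simp only [dropAndFirst, mem_union, mem_insert, mem_Icc, or_assoc]

lemma bounds_of_mem_dropAndFirst (hx : x ∈ dropAndFirst r σ p) :
    (1 ≤ x ∧ x ≤ σ.length + 1) ∨ (σ.length + p + 3 ≤ x ∧ x ≤ 2 * r) := by
  rcases mem_dropAndFirst.1 hx with h | h | h
  · omega
  · have := bounds_of_mem_andPos h; omega
  · exact Or.inr h

lemma reaches_dropAndFirst : Reaches (dropAndFirst r σ p) 1 σ := by
  refine ⟨fun x hx => mem_dropAndFirst.2 (Or.inr (Or.inl hx)),
    disjoint_left.2 fun x hx hxf => ?_⟩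
  have := bounds_of_mem_orPos hx
  rcases mem_dropAndFirst.1 hxf with h | h | h
  · omega
  · exact disjoint_left.1 (disjoint_andPos_orPos σ 1) h hx
  · omega

lemma dropAndFirst_mem_powersetCard (hp : σ.count true + p + 1 = r)
    (hσ : σ.count false + 1 < r) (hn : 2 * r ≤ n) :
    dropAndFirst r σ p ∈ powersetCard r (ground n) := by
  have := σ.count_false_add_count_true
  refine mem_powersetCard.2 ⟨fun x hx => ?_, ?_⟩
  · have := bounds_of_mem_dropAndFirst hx
    rw [mem_ground]; omega
  · have hnotin : σ.length + 1 ∉ andPos 1 σ := fun h => by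
      have := bounds_of_mem_andPos h; omega
    rw [dropAndFirst, card_union_of_disjoint, card_insert_of_notMem hnotin, card_andPos,
      Nat.card_Icc]
    · omega
    · refine disjoint_left.2 fun x hx hx' => ?_
      have := bounds_of_mem_dropAndFirst (r := r) (p := p) (mem_union_left _ hx)
      rw [mem_Icc] at hx'
      rcases mem_insert.1 hx with h | h
      · omega
      · have := bounds_of_mem_andPos h; omega

lemma setCond_dropAndFirst_append_false :
    setCond (dropAndFirst r σ p) 1 (σ ++ false :: List.replicate p true) = false := by
  have hrep : setCond (dropAndFirst r σ p) (1 + σ.length + 1) (List.replicate p true) = false := by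
    rw [Bool.eq_false_iff, ne_eq, setCond_replicate_true]
    rintro ⟨x, hx, hxf⟩
    have := bounds_of_mem_dropAndFirst hxf
    rw [mem_Icc] at hx
    omega
  simp [setCond_append_of_reaches _ reaches_dropAndFirst, setCond, hrep]

/-- An `(n - r)`-set satisfying `σ` but not `σ ∧ ∨^p` avoids the `r` positions of the `∨` symbols
of `σ ∧ ∨^p` and of its last atom, so it is their complement in `[n]`. -/
lemma dropAndFirst_subset (hp : σ.count true + p + 1 = r) (hσ : σ.count false + 1 < r)
    (hn : 2 * r ≤ n) {h : Finset ℕ} (hh : h ⊆ ground n) (hcard : #h = n - r)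
    (hσh : setCond h 1 σ = true) (hτh : setCond h 1 (σ ++ false :: List.replicate p true) = false) :
    dropAndFirst r σ p ⊆ h := by
  have hlen := σ.count_false_add_count_true
  have hreach : Reaches h 1 σ := by
    by_contra hr
    rw [setCond_append_of_not_reaches _ hr] at hτh
    simp [hτh] at hσh
  rw [setCond_eq_of_reaches hreach, decide_eq_true_eq] at hσh
  simp only [setCond_append_of_reaches _ hreach, setCond, hσh, decide_true, Bool.true_and,
    Bool.eq_false_iff, ne_eq, setCond_replicate_true, not_exists, not_and, mem_Icc] at hτh
  have hor (x) (hx : x ∈ orPos 1 σ) : 1 ≤ x ∧ x ≤ σ.length := by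
    have := bounds_of_mem_orPos hx; omega
  have hdisj : Disjoint (orPos 1 σ) (Icc (σ.length + 2) (σ.length + p + 2)) :=
    disjoint_left.2 fun x hx hx' => by have := hor x hx; rw [mem_Icc] at hx'; omega
  refine subset_of_subset_ground_sdiff (X := orPos 1 σ ∪ Icc (σ.length + 2) (σ.length + p + 2))
    (union_subset (fun x hx => ?_) (fun x hx => ?_)) ?_ (fun x hx => ?_) hcard (fun x hx => ?_)
  · have := hor x hx; rw [mem_ground]; omega
  · rw [mem_Icc] at hx; rw [mem_ground]; omega
  · rw [card_union_of_disjoint hdisj, card_orPos, Nat.card_Icc]; omega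
  · refine mem_sdiff.2 ⟨hh hx, ?_⟩
    rw [mem_union, mem_Icc, not_or]
    exact ⟨disjoint_right.1 hreach.2 hx, fun hx' => hτh x (by omega) hx⟩
  · refine mem_sdiff.2 ⟨(mem_powersetCard.1 (dropAndFirst_mem_powersetCard hp hσ hn)).1 hx, ?_⟩
    rw [mem_union, mem_Icc, not_or]
    have := bounds_of_mem_dropAndFirst hx
    exact ⟨disjoint_right.1 reaches_dropAndFirst.2 hx, by omega⟩

lemma isStep_drop_and (hp : σ.count true + p + 1 = r) (hσ : σ.count false + 1 < r)
    (hn : 2 * r ≤ n) :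
    IsStep n r (.seq (σ ++ false :: List.replicate p true)) (.seq σ) (dropAndFirst r σ p) := by
  have hmem := dropAndFirst_mem_powersetCard hp hσ hn
  refine ⟨hmem, ?_, by simp [setCond_dropAndFirst_append_false],
    fun e => setCond_of_setCond_append_false, fun e he hlex => ?_,
    fun h hh hcard hσh hτh => dropAndFirst_subset hp hσ hn hh hcard hσh (by simpa using hτh)⟩
  · simp [setCond_eq_of_reaches reaches_dropAndFirst, mem_dropAndFirst, add_comm]
  · refine setCond_or_eq_of_lexLT he hmem (fun x hx => ?_) (fun c hc x hx hxc => ?_) hlex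
    · simp only [andPos_append, andPos, andPos_replicate_true, mem_union, mem_insert,
        notMem_empty, or_false] at hx
      rw [mem_dropAndFirst]
      rcases hx with h | h
      · exact Or.inr (Or.inl h)
      · omega
    · simp only [List.length_append, List.length_cons, List.length_replicate] at hx
      have := bounds_of_mem_dropAndFirst hc
      rw [mem_dropAndFirst]
      omega

end DropAnd

lemma isStep_alpha (hr : 1 ≤ r) (hn : 2 * r ≤ n) :
    IsStep n r .alpha (.seq (List.replicate (r - 1) false)) (Icc 1 r) := by
  have hr' : 1 + (r - 1) = r := by omega
  refine ⟨mem_powersetCard.2 ⟨Icc_subset_Icc_right (by omega), by simp⟩, ?_, id,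
    fun _ h => h.elim, fun e he => ?_, fun h _ _ hσ _ => ?_⟩
  · simp [setCond_replicate_false, hr']
  · rintro ⟨d, hde, hdf, hlex⟩
    have hd : r < d := by
      have := (mem_ground.1 ((mem_powersetCard.1 he).1 hde)).1; rw [mem_Icc] at hdf; omega
    refine Or.inr (eq_of_subset_of_card_le (fun c hc => hlex c hc ?_) ?_).symm
    · rw [mem_Icc] at hc; omega
    · simp [(mem_powersetCard.1 he).2]
  · simpa [setCond_replicate_false, hr'] using hσ

lemma isStep_omega (hr : 1 ≤ r) (hn : 2 * r ≤ n) :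
    IsStep n r (.seq (List.replicate (r - 1) true)) .omega (Icc (r + 1) (2 * r)) := by
  have hr' : 1 + (r - 1) = r := by omega
  have hmem : Icc (r + 1) (2 * r) ∈ powersetCard r (ground n) :=
    mem_powersetCard.2 ⟨Icc_subset_Icc (by omega) hn, by rw [Nat.card_Icc]; omega⟩
  refine ⟨hmem, trivial, ?_, fun _ _ => trivial, fun e he hlex => ?_, fun h hh hcard _ hτ => ?_⟩
  · simp only [Theta.holds_seq, setCond_replicate_true, hr', mem_Icc]
    rintro ⟨x, hx, hx'⟩; omega
  · refine setCond_or_eq_of_lexLT he hmem (by simp [andPos_replicate_true])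
      (fun c hc x hx hxc => ?_) hlex
    simp only [mem_Icc, List.length_replicate] at hc hx ⊢; omega
  · simp only [Theta.holds_seq, setCond_replicate_true, hr', not_exists, not_and] at hτ
    refine subset_of_subset_ground_sdiff (Icc_subset_Icc_right (by omega)) (by simp)
      (fun x hx => mem_sdiff.2 ⟨hh hx, fun hx' => hτ x hx' hx⟩) hcard fun x hx => ?_
    rw [mem_Icc] at hx
    simp only [mem_sdiff, mem_ground, mem_Icc]; omega

/-- Successors in `Θ_r`: `α ↦ ∧^(r-1)` and `∨^(r-1) ↦ ω`; any other `τ` gets `∨∧^k` appended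
while it has fewer than `r - 1` symbols `∨`, and otherwise loses its final block `∧∨^p`. -/
lemma exists_isStep (hr : 1 ≤ r) (hn : 2 * r ≤ n) {τ : Theta} (hτ : τ.valid r)
    (hω : τ ≠ .omega) : ∃ σ f₀, σ.valid r ∧ IsStep n r τ σ f₀ := by
  cases τ with
  | alpha =>
    refine ⟨_, _, ?_, isStep_alpha hr hn⟩
    constructor <;> simp [List.count_replicate] <;> omega
  | omega => exact absurd rfl hω
  | seq τ =>
    obtain ⟨hf, ht⟩ := hτ
    by_cases hb : τ.count true + 1 < r
    · refine ⟨_, _, ?_, isStep_append_or (k := r - 1 - τ.count false) (by omega) hb hn⟩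
      constructor <;> simp [List.count_replicate] <;> omega
    by_cases hfτ : false ∈ τ
    · obtain ⟨σ, p, rfl⟩ := List.exists_eq_append_false_replicate_true hfτ
      have hcf : (σ ++ false :: List.replicate p true).count false = σ.count false + 1 := by
        simp [List.count_replicate]
      have hct : (σ ++ false :: List.replicate p true).count true = σ.count true + p := by
        simp
      rw [hcf] at hf
      rw [hct] at ht hb
      refine ⟨_, _, ?_, isStep_drop_and (p := p) (by omega) (by omega) hn⟩
      constructor <;> omega
    · have : τ = List.replicate (r - 1) true := by
        have hlen := τ.count_false_add_count_true
        rw [List.count_eq_zero.2 hfτ] at hlen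
        rw [List.eq_replicate_iff]
        exact ⟨by omega, fun b hb => by simpa using ne_of_mem_of_not_mem hb hfτ⟩
      exact this ▸ ⟨.omega, _, trivial, isStep_omega hr hn⟩

lemma exists_isStep_card_Tset_lt_le (hr : 1 ≤ r) (hn : 2 * r ≤ n) {t : ℕ} (ht₀ : 0 < t)
    (ht : t ≤ #(powersetCard r (ground n))) :
    ∃ τ σ f₀, τ.valid r ∧ σ.valid r ∧ IsStep n r τ σ f₀ ∧
      #(τ.Tset n r) < t ∧ t ≤ #(σ.Tset n r) := by
  induction t with
  | zero => omega
  | succ t ih =>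
    rcases Nat.eq_zero_or_pos t with rfl | ht₀
    · obtain ⟨σ, f₀, hσ, hs⟩ := exists_isStep (τ := .alpha) hr hn trivial (by simp)
      exact ⟨.alpha, σ, f₀, trivial, hσ, hs, by simp [Theta.Tset], hs.card_Tset_lt⟩
    obtain ⟨τ, σ, f₀, hτ, hσ, hs, h₁, h₂⟩ := ih ht₀ (by omega)
    rcases h₂.lt_or_eq with h₂ | h₂
    · exact ⟨τ, σ, f₀, hτ, hσ, hs, by omega, h₂⟩
    have hω : σ ≠ .omega := by rintro rfl; simp only [Theta.Tset] at h₂; omega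
    obtain ⟨σ', f₀', hσ', hs'⟩ := exists_isStep hr hn hσ hω
    exact ⟨σ, σ', f₀', hσ, hσ', hs', by omega, by have := hs'.card_Tset_lt; omega⟩

end Steps

/-- For every `0 ≤ t ≤ C(n, r)` there is `0 ≤ i ≤ C(2r, r)` with `b(t) = M(i)`:
the maximal blocker size over `t`-element families of `r`-subsets of `[n]` is
`|T_r(σ)|` for some `σ ∈ Θ_r`. -/
theorem stmt18 (r n t : ℕ) (hr : 1 ≤ r) (hn : 2 * r ≤ n) (ht : t ≤ Nat.choose n r) :
    ∃ σ : Theta, σ.valid r ∧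
      IsGreatest {m : ℕ | ∃ F ⊆ Finset.powersetCard r (ground n),
        F.card = t ∧ (blockerT n r F).card = m} ((σ.Tset n r).card) := by
  rcases Nat.eq_zero_or_pos t with rfl | ht₀
  · refine ⟨.omega, trivial, ⟨∅, empty_subset _, rfl, by simp [blockerT, Theta.Tset]⟩, ?_⟩
    rintro _ ⟨F, -, -, rfl⟩
    exact card_le_card (filter_subset _ _)
  obtain ⟨τ, σ, f₀, hτ, hσ, hs, h₁, h₂⟩ :=
    exists_isStep_card_Tset_lt_le hr hn ht₀ (by simpa [card_ground] using ht)
  exact ⟨σ.bar, Theta.valid_bar hσ, hs.isGreatest_card_Tset_bar hτ hσ hn h₁ h₂⟩
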